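/- arXiv:2510.04389 — 4 statements merged into one kernel-verified Lean document; each statement's English description precedes it below -/
import Mathlib

section
/- Let A = [[1,-1],[0,1]] and B = [[1,0],[1,1]] in SL(2,ℤ). If a word of length n in A and B (each letter being A or B, no inverses) equals the identity matrix, then 12 divides n. -/
abbrev SL2Z := Matrix.SpecialLinearGroup (Fin 2) ℤ

def A : SL2Z := ⟨!![1, -1; 0, 1], by norm_num [Matrix.det_fin_two_of]⟩
def B : SL2Z := ⟨!![1, 0; 1, 1], by norm_num [Matrix.det_fin_two_of]⟩

def g3 (a b c d : ZMod 3) : ZMod 3 := 2*a*c+2*b*d+2*c*d+b*c*c*d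
def g4 (a b c d : ZMod 4) : ZMod 4 := 1+2*a+a*c+2*b+b*d+3*b*c+b*c*d+b*c*c+d

theorem key3 : ∀ a b c d : ZMod 3, a*d-b*c=1 → ∀ e f g h : ZMod 3, e*h-f*g=1 →
    g3 (a*e+b*g) (a*f+b*h) (c*e+d*g) (c*f+d*h) = g3 a b c d + g3 e f g h := by decide

theorem key4 : ∀ a b c d : ZMod 4, a*d-b*c=1 → ∀ e f g h : ZMod 4, e*h-f*g=1 →
    g4 (a*e+b*g) (a*f+b*h) (c*e+d*g) (c*f+d*h) = g4 a b c d + g4 e f g h := by decide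

def F3 (M : SL2Z) : ZMod 3 :=
  g3 (M.1 0 0 : ZMod 3) (M.1 0 1 : ZMod 3) (M.1 1 0 : ZMod 3) (M.1 1 1 : ZMod 3)

def F4 (M : SL2Z) : ZMod 4 :=
  g4 (M.1 0 0 : ZMod 4) (M.1 0 1 : ZMod 4) (M.1 1 0 : ZMod 4) (M.1 1 1 : ZMod 4)

lemma det_cast (n : ℕ) [NeZero n] (M : SL2Z) :
    (M.1 0 0 : ZMod n) * (M.1 1 1 : ZMod n) - (M.1 0 1 : ZMod n) * (M.1 1 0 : ZMod n) = 1 := by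
  have h : M.1 0 0 * M.1 1 1 - M.1 0 1 * M.1 1 0 = 1 := by
    have := M.2
    rwa [Matrix.det_fin_two] at this
  have := congrArg (Int.cast : ℤ → ZMod n) h
  push_cast at this
  exact_mod_cast this

lemma F3_mul (M N : SL2Z) : F3 (M * N) = F3 M + F3 N := by
  have hM := det_cast 3 M
  have hN := det_cast 3 N
  have key := key3 _ _ _ _ hM _ _ _ _ hN
  simp only [F3, Matrix.SpecialLinearGroup.coe_mul, Matrix.mul_apply, Fin.sum_univ_two]
  push_cast
  convert key using 2

lemma F4_mul (M N : SL2Z) : F4 (M * N) = F4 M + F4 N := by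
  have hM := det_cast 4 M
  have hN := det_cast 4 N
  have key := key4 _ _ _ _ hM _ _ _ _ hN
  simp only [F4, Matrix.SpecialLinearGroup.coe_mul, Matrix.mul_apply, Fin.sum_univ_two]
  push_cast
  convert key using 2

lemma F3_one : F3 1 = 0 := by
  simp [F3, g3, Matrix.SpecialLinearGroup.coe_one]

lemma F4_one : F4 1 = 0 := by
  simp [F4, g4, Matrix.SpecialLinearGroup.coe_one]
  try decide

lemma F3_A : F3 A = 1 := by
  simp [F3, g3, A]
  try decide

lemma F3_B : F3 B = 1 := by
  simp [F3, g3, B]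
  try decide

lemma F4_A : F4 A = 1 := by
  simp [F4, g4, A]
  try decide

lemma F4_B : F4 B = 1 := by
  simp [F4, g4, B]
  try decide

lemma F3_prod (l : List SL2Z) (hl : ∀ x ∈ l, x = A ∨ x = B) :
    F3 l.prod = (l.length : ZMod 3) := by
  induction l with
  | nil => simpa using F3_one
  | cons x t ih =>
    have hx : F3 x = 1 := by
      rcases hl x (List.mem_cons_self) with h | h <;> rw [h]
      · exact F3_A
      · exact F3_B
    have ht := ih (fun y hy => hl y (List.mem_cons_of_mem x hy))
    simp [List.prod_cons, F3_mul, hx, ht, add_comm]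

lemma F4_prod (l : List SL2Z) (hl : ∀ x ∈ l, x = A ∨ x = B) :
    F4 l.prod = (l.length : ZMod 4) := by
  induction l with
  | nil => simpa using F4_one
  | cons x t ih =>
    have hx : F4 x = 1 := by
      rcases hl x (List.mem_cons_self) with h | h <;> rw [h]
      · exact F4_A
      · exact F4_B
    have ht := ih (fun y hy => hl y (List.mem_cons_of_mem x hy))
    simp [List.prod_cons, F4_mul, hx, ht, add_comm]

/-- If a positive word in A and B equals the identity, its length is divisible by 12. -/
theorem twelve_dvd_length_of_word_eq_one (l : List SL2Z)
    (hl : ∀ x ∈ l, x = A ∨ x = B) (hprod : l.prod = 1) : 12 ∣ l.length := by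
  have h3 : (3 : ℕ) ∣ l.length := by
    have := F3_prod l hl
    rw [hprod, F3_one] at this
    exact (ZMod.natCast_eq_zero_iff _ _).mp this.symm
  have h4 : (4 : ℕ) ∣ l.length := by
    have := F4_prod l hl
    rw [hprod, F4_one] at this
    exact (ZMod.natCast_eq_zero_iff _ _).mp this.symm
  have : Nat.Coprime 4 3 := by decide
  exact (show (12:ℕ) = 4*3 by norm_num) ▸ this.mul_dvd_of_dvd_of_dvd h4 h3
end

section
/- Let A = [[1,-1],[0,1]] and B = [[1,0],[1,1]] in SL(2,ℤ). The orbit of the pair (A, B) under the Hurwitz action of the braid group B₂ (i.e., under iterating the move (g₁,g₂) ↦ (g₁g₂g₁⁻¹, g₁) and its inverse) has exactly 3 elements. -/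
/-- The Hurwitz move on pairs: (g₁, g₂) ↦ (g₁g₂g₁⁻¹, g₁). -/
def hurPair {G : Type*} [Group G] (p : G × G) : G × G := (p.1 * p.2 * p.1⁻¹, p.1)

/-- One step of the B₂ Hurwitz action (the move or its inverse). -/
def hurPairStep {G : Type*} [Group G] (p q : G × G) : Prop :=
  q = hurPair p ∨ p = hurPair q

def C : SL2Z := ⟨!![0, -1; 1, 2], by norm_num [Matrix.det_fin_two_of]⟩

def hurPairInv {G : Type*} [Group G] (p : G × G) : G × G := (p.2, p.2⁻¹ * p.1 * p.2)

lemma hurPairInv_hurPair {G : Type*} [Group G] (p : G × G) : hurPairInv (hurPair p) = p := by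
  simp [hurPair, hurPairInv, mul_assoc]

lemma hurPair_eq {G : Type*} [Group G] (p q : G × G) (h : p.1 * p.2 = q.1 * p.1)
    (h2 : q.2 = p.1) : hurPair p = q := by
  obtain ⟨p1, p2⟩ := p; obtain ⟨q1, q2⟩ := q
  simp only [hurPair, Prod.mk.injEq]
  constructor
  · rw [mul_inv_eq_iff_eq_mul]; exact h
  · exact h2.symm

lemma hAB : hurPair (A, B) = (C, A) := by
  apply hurPair_eq _ _ _ rfl
  ext i j
  rw [Matrix.SpecialLinearGroup.coe_mul, Matrix.SpecialLinearGroup.coe_mul]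
  fin_cases i <;> fin_cases j <;> simp [A, B, C, Matrix.mul_apply, Fin.sum_univ_two]

lemma hCA : hurPair (C, A) = (B, C) := by
  apply hurPair_eq _ _ _ rfl
  ext i j
  rw [Matrix.SpecialLinearGroup.coe_mul, Matrix.SpecialLinearGroup.coe_mul]
  fin_cases i <;> fin_cases j <;> simp [A, B, C, Matrix.mul_apply, Fin.sum_univ_two]

lemma hBC : hurPair (B, C) = (A, B) := by
  apply hurPair_eq _ _ _ rfl
  ext i j
  rw [Matrix.SpecialLinearGroup.coe_mul, Matrix.SpecialLinearGroup.coe_mul]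
  fin_cases i <;> fin_cases j <;> simp [A, B, C, Matrix.mul_apply, Fin.sum_univ_two]

lemma orbit_eq :
    {q : SL2Z × SL2Z | Relation.ReflTransGen hurPairStep (A, B) q}
      = {(A, B), (C, A), (B, C)} := by
  apply Set.eq_of_subset_of_subset
  · intro q hq
    induction hq with
    | refl => left; rfl
    | tail _ hstep ih =>
      rename_i p q _
      have key : ∀ r : SL2Z × SL2Z,
          r ∈ ({(A, B), (C, A), (B, C)} : Set (SL2Z × SL2Z)) →
          (hurPair r ∈ ({(A, B), (C, A), (B, C)} : Set (SL2Z × SL2Z)) ∧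
           hurPairInv r ∈ ({(A, B), (C, A), (B, C)} : Set (SL2Z × SL2Z))) := by
        intro r hr
        rcases hr with rfl | rfl | rfl
        · rw [hAB, ← hBC, hurPairInv_hurPair]
          exact ⟨by right; left; rfl, by right; right; rfl⟩
        · rw [hCA, ← hAB, hurPairInv_hurPair]
          exact ⟨by right; right; rfl, by left; rfl⟩
        · rw [hBC, ← hCA, hurPairInv_hurPair]
          exact ⟨by left; rfl, by right; left; rfl⟩
      rcases hstep with h | h
      · rw [h]; exact (key _ ih).1
      · have : q = hurPairInv p := by rw [h, hurPairInv_hurPair]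
        rw [this]; exact (key _ ih).2
  · intro q hq
    rcases hq with rfl | rfl | rfl
    · exact Relation.ReflTransGen.refl
    · exact Relation.ReflTransGen.single (Or.inl hAB.symm)
    · exact Relation.ReflTransGen.tail (Relation.ReflTransGen.single (Or.inl hAB.symm))
        (Or.inl hCA.symm)

/-- The Hurwitz orbit of (A, B) under B₂ has exactly 3 elements. -/
theorem hurwitz_orbit_pair_card_three :
    {q : SL2Z × SL2Z | Relation.ReflTransGen hurPairStep (A, B) q}.ncard = 3 := by
  rw [orbit_eq]
  rw [Set.ncard_eq_three]
  refine ⟨(A, B), (C, A), (B, C), ?_, ?_, ?_, rfl⟩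
  · intro h
    have := congrArg (fun p => (p.1 : Matrix (Fin 2) (Fin 2) ℤ) 0 0) h
    simp [A, C] at this
  · intro h
    have := congrArg (fun p => (p.1 : Matrix (Fin 2) (Fin 2) ℤ) 0 1) h
    simp [A, B] at this
  · intro h
    have := congrArg (fun p => (p.1 : Matrix (Fin 2) (Fin 2) ℤ) 0 0) h
    simp [B, C] at this
end

section
/- Let G be a group and let x, y ∈ G with ⟨x, y⟩ free of rank 2 on x and y. Define the Hurwitz move σ on pairs by σ(g₁, g₂) = (g₁g₂g₁⁻¹, g₁). Then the pairs σ^k(x, y) for k ∈ ℤ are pairwise distinct; in particular the Hurwitz orbit of (x, y) is infinite. -/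
/-- The Hurwitz move on pairs, as a permutation of G × G. -/
def hur {G : Type*} [Group G] : Equiv.Perm (G × G) where
  toFun p := (p.1 * p.2 * p.1⁻¹, p.1)
  invFun p := (p.2, p.2⁻¹ * p.1 * p.2)
  left_inv p := by obtain ⟨a, b⟩ := p; ext <;> simp <;> group
  right_inv p := by obtain ⟨a, b⟩ := p; ext <;> simp <;> group

section Aux

variable {G : Type*} [Group G]

lemma hur_apply (g h : G) : hur (g, h) = (g * h * g⁻¹, g) := rfl

lemma hur_sq (g h : G) :
    (hur ^ (2:ℤ)) (g, h) = ((g*h) * g * (g*h)⁻¹, (g*h) * h * (g*h)⁻¹) := by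
  have : (hur ^ (2:ℤ)) (g, h) = hur (hur (g, h)) := by
    rw [show (2:ℤ) = 1 + 1 by norm_num, zpow_add, zpow_one, Equiv.Perm.mul_apply]
  rw [this, hur_apply, hur_apply]
  ext <;> simp <;> group

/-- The k-th even Hurwitz image. -/
def hurT (x y : G) (k : ℤ) : G × G :=
  ((x*y)^k * x * (x*y)^(-k), (x*y)^k * y * (x*y)^(-k))

lemma hur_sq_T (x y : G) (k : ℤ) : (hur ^ (2:ℤ)) (hurT x y k) = hurT x y (k+1) := by
  rw [hurT, hur_sq]
  have hprod : (x*y)^k * x * (x*y)^(-k) * ((x*y)^k * y * (x*y)^(-k)) = x*y := by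
    have h1 : ∀ a u v : G, a * u * a⁻¹ * (a * v * a⁻¹) = a * (u*v) * a⁻¹ := by
      intro a u v; group
    have h2 : ∀ c : G, ∀ m : ℤ, c^m * c * (c^m)⁻¹ = c := by intro c m; group
    rw [zpow_neg, h1, h2]
  have step : ∀ c g : G, c * (c^k * g * c^(-k)) * c⁻¹ = c^(k+1) * g * c^(-(k+1)) := by
    intro c g; group
  rw [hprod, hurT, Prod.mk.injEq]
  exact ⟨step (x*y) x, step (x*y) y⟩

lemma hur_even (x y : G) (k : ℤ) : (hur ^ (2 * k)) (x, y) = hurT x y k := by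
  induction k using Int.induction_on with
  | zero => simp [hurT]
  | succ k ih =>
      have h : (hur ^ (2 * ((k:ℤ) + 1))) (x, y) = (hur ^ (2:ℤ)) ((hur ^ (2 * (k:ℤ))) (x, y)) := by
        rw [← Equiv.Perm.mul_apply, ← zpow_add]; ring_nf
      rw [h, ih, hur_sq_T]
  | pred k ih =>
      have h : (hur ^ (2:ℤ)) ((hur ^ (2 * (-(k:ℤ) - 1))) (x, y)) = (hur ^ (2 * (-(k:ℤ)))) (x, y) := by
        rw [← Equiv.Perm.mul_apply, ← zpow_add]; ring_nf
      have h2 : (hur ^ (2:ℤ)) ((hur ^ (2 * (-(k:ℤ) - 1))) (x, y))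
          = (hur ^ (2:ℤ)) (hurT x y (-(k:ℤ) - 1)) := by
        rw [h, ih, hur_sq_T]; norm_num
      exact (Equiv.injective _) h2

/-- Matrix model: two unit upper/diagonal matrices generating a suitable subgroup. -/
def Umat : (Matrix (Fin 2) (Fin 2) ℚ)ˣ where
  val := !![1,1;0,1]
  inv := !![1,-1;0,1]
  val_inv := by norm_num [Matrix.mul_fin_two]; rw [Matrix.one_fin_two]
  inv_val := by norm_num [Matrix.mul_fin_two]; rw [Matrix.one_fin_two]

def Vmat : (Matrix (Fin 2) (Fin 2) ℚ)ˣ where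
  val := !![2,0;0,1]
  inv := !![1/2,0;0,1]
  val_inv := by norm_num [Matrix.mul_fin_two]; rw [Matrix.one_fin_two]
  inv_val := by norm_num [Matrix.mul_fin_two]; rw [Matrix.one_fin_two]

lemma UV_val : ((Umat * Vmat : (Matrix (Fin 2) (Fin 2) ℚ)ˣ)).val = !![2,1;0,1] := by
  norm_num [Umat, Vmat, Units.val_mul, Matrix.mul_fin_two]

lemma C_zpow (q : ℤ) :
    ((Umat * Vmat) ^ q : (Matrix (Fin 2) (Fin 2) ℚ)ˣ).val = !![(2:ℚ)^q, 2^q - 1; 0, 1] := by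
  induction q using Int.induction_on with
  | zero => norm_num; rw [Matrix.one_fin_two]
  | succ k ih =>
      rw [zpow_add_one, Units.val_mul, ih, UV_val, Matrix.mul_fin_two]
      have h2 : (2:ℚ)^((k:ℤ)+1) = 2^(k:ℤ) * 2 := by rw [zpow_add_one₀]; norm_num
      rw [h2]; ring_nf
  | pred k ih =>
      rw [zpow_sub_one, Units.val_mul, ih]
      have hinv : ((Umat * Vmat : (Matrix (Fin 2) (Fin 2) ℚ)ˣ)⁻¹).val = !![1/2,-1/2;0,1] := by
        norm_num [Umat, Vmat, Units.val_mul, Matrix.mul_fin_two]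
      rw [hinv, Matrix.mul_fin_two]
      have h2 : (2:ℚ)^(-(k:ℤ)-1) = 2^(-(k:ℤ)) * (1/2) := by
        rw [zpow_sub_one₀ (by norm_num)]; norm_num
      rw [h2]; ring_nf

lemma key_matrix (q : ℤ)
    (h : ((Umat * Vmat)^q : (Matrix (Fin 2) (Fin 2) ℚ)ˣ) * Umat = Umat * (Umat * Vmat)^q) :
    q = 0 := by
  have h' := congrArg Units.val h
  rw [Units.val_mul, Units.val_mul, C_zpow] at h'
  have hU : (Umat : (Matrix (Fin 2) (Fin 2) ℚ)ˣ).val = !![1,1;0,1] := rfl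
  rw [hU, Matrix.mul_fin_two, Matrix.mul_fin_two] at h'
  have h01 := congrFun (congrFun h' 0) 1
  simp at h01
  have : (2:ℚ)^q = 2^(0:ℤ) := by norm_num at h01 ⊢; linarith
  exact zpow_right_injective₀ (by norm_num) (by norm_num) this

/-- In the free group on Bool, c^q · A · c^{-q} = A forces q = 0, where c = A·B. -/
lemma free_conj_eq_self (q : ℤ)
    (h : (FreeGroup.of true * FreeGroup.of false)^q * FreeGroup.of true *
        (FreeGroup.of true * FreeGroup.of false)^(-q) = FreeGroup.of true) :
    q = 0 := by
  let φ : FreeGroup Bool →* (Matrix (Fin 2) (Fin 2) ℚ)ˣ :=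
    FreeGroup.lift (fun b => if b then Umat else Vmat)
  have hφ := congrArg φ h
  simp only [map_mul, map_zpow, φ, FreeGroup.lift_apply_of, if_true, if_false] at hφ
  apply key_matrix
  have := congrArg (· * (Umat * Vmat)^q) hφ
  simp only [mul_assoc] at this ⊢
  rw [zpow_neg] at this
  simpa [mul_assoc] using this

/-- In the free group on Bool, c^q · A · c^{-q} = B is impossible. -/
lemma free_conj_ne (q : ℤ) :
    (FreeGroup.of true * FreeGroup.of false)^q * FreeGroup.of true *
        (FreeGroup.of true * FreeGroup.of false)^(-q) ≠ FreeGroup.of false := by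
  intro h
  let ε : FreeGroup Bool →* Multiplicative ℤ :=
    FreeGroup.lift (fun b => if b then Multiplicative.ofAdd (1:ℤ) else 1)
  have hε := congrArg (fun w => Multiplicative.toAdd (ε w)) h
  simp only [map_mul, map_zpow, ε, FreeGroup.lift_apply_of, if_true, if_false,
    toAdd_mul, toAdd_zpow] at hε
  simp at hε

end Aux

/-- If x, y generate a free group of rank 2 in G, then the pairs σᵏ(x, y) for k ∈ ℤ
are pairwise distinct; in particular the Hurwitz orbit of (x, y) is infinite. -/
theorem hurwitz_orbit_of_free_pair_infinite {G : Type*} [Group G] (x y : G)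
    (hfree : Function.Injective
      (FreeGroup.lift (fun b : Bool => if b then x else y) : FreeGroup Bool →* G)) :
    Function.Injective (fun k : ℤ => (hur ^ k) (x, y)) ∧
      {q : G × G | ∃ k : ℤ, q = (hur ^ k) (x, y)}.Infinite := by
  set f : FreeGroup Bool →* G := FreeGroup.lift (fun b : Bool => if b then x else y) with hf
  have hfA : f (FreeGroup.of true) = x := by simp [hf]
  have hfB : f (FreeGroup.of false) = y := by simp [hf]
  -- the key fixed-point statement
  have hfix : ∀ n : ℤ, (hur ^ n) (x, y) = (x, y) → n = 0 := by
    intro n hn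
    -- conjugation pullback device
    have pull : ∀ q : ℤ, (x*y)^q * x * (x*y)^(-q) = x →
        (FreeGroup.of true * FreeGroup.of false)^q * FreeGroup.of true *
          (FreeGroup.of true * FreeGroup.of false)^(-q) = FreeGroup.of true := by
      intro q hq
      apply hfree
      simpa [map_mul, map_zpow, hfA, hfB] using hq
    rcases Int.even_or_odd n with ⟨q, hq⟩ | ⟨q, hq⟩
    · -- n = 2q
      have h2q : n = 2 * q := by omega
      rw [h2q, hur_even, hurT] at hn
      have h1 : (x*y)^q * x * (x*y)^(-q) = x := congrArg Prod.fst hn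
      have := free_conj_eq_self q (pull q h1)
      omega
    · -- n = 2q + 1 : impossible
      exfalso
      have h2q : n = 2 * q + 1 := hq
      have hsplit : (hur ^ n) (x, y) = hur ((hur ^ (2*q)) (x, y)) := by
        rw [h2q, ← Equiv.Perm.mul_apply, ← zpow_one_add]; ring_nf
      rw [hsplit, hur_even, hurT, hur_apply] at hn
      have h1 : (x*y)^q * x * (x*y)^(-q) = y := congrArg Prod.snd hn
      apply free_conj_ne q
      apply hfree
      simpa [map_mul, map_zpow, hfA, hfB] using h1
  have hinj : Function.Injective (fun k : ℤ => (hur ^ k) (x, y)) := by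
    intro k m hkm
    simp only at hkm
    have h2 : (hur ^ m) ((hur ^ (k - m)) (x, y)) = (hur ^ m) (x, y) := by
      rw [← Equiv.Perm.mul_apply, ← zpow_add, show m + (k - m) = k by ring]
      exact hkm
    have h3 : (hur ^ (k - m)) (x, y) = (x, y) := Equiv.injective _ h2
    have := hfix _ h3
    omega
  refine ⟨hinj, ?_⟩
  exact Set.infinite_of_injective_forall_mem hinj (fun k => ⟨k, rfl⟩)
end

section
/- Let A = [[1,-1],[0,1]] and B = [[1,0],[1,1]] in SL(2,ℤ), and set P = A·B·A⁻¹ and Q = B·A·B⁻¹. Then the subgroup of SL(2,ℤ) generated by P and Q is free of rank 2. -/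
/-- Nonzero integer vectors in the plane. -/
abbrev PPV := {v : Fin 2 → ℤ // v ≠ 0}

instance : SMul SL2Z PPV :=
  ⟨fun g v => ⟨g.1.mulVec v.1, by
    intro h
    apply v.2
    have h2 : (g⁻¹ * g).1.mulVec v.1 = 0 := by
      rw [Matrix.SpecialLinearGroup.coe_mul, ← Matrix.mulVec_mulVec, h,
        Matrix.mulVec_zero]
    rwa [inv_mul_cancel, Matrix.SpecialLinearGroup.coe_one, Matrix.one_mulVec] at h2⟩⟩

theorem ppv_smul_coe (g : SL2Z) (v : PPV) : (g • v).1 = g.1.mulVec v.1 := rfl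

instance : MulAction SL2Z PPV where
  one_smul v := by
    ext1
    rw [ppv_smul_coe, Matrix.SpecialLinearGroup.coe_one, Matrix.one_mulVec]
  mul_smul g h v := by
    ext1
    simp only [ppv_smul_coe, Matrix.SpecialLinearGroup.coe_mul, Matrix.mulVec_mulVec]

def Pm : SL2Z := ⟨!![0, -1; 1, 2], by norm_num [Matrix.det_fin_two_of]⟩
def Qm : SL2Z := ⟨!![2, -1; 1, 0], by norm_num [Matrix.det_fin_two_of]⟩
def PmI : SL2Z := ⟨!![2, 1; -1, 0], by norm_num [Matrix.det_fin_two_of]⟩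
def QmI : SL2Z := ⟨!![0, 1; -1, 2], by norm_num [Matrix.det_fin_two_of]⟩

theorem hPm : A * B * A⁻¹ = Pm := by
  rw [mul_inv_eq_iff_eq_mul]
  ext i j
  simp only [Matrix.SpecialLinearGroup.coe_mul]
  simp only [A, B, Pm, Matrix.mul_fin_two]
  norm_num

theorem hQm : B * A * B⁻¹ = Qm := by
  rw [mul_inv_eq_iff_eq_mul]
  ext i j
  simp only [Matrix.SpecialLinearGroup.coe_mul]
  simp only [A, B, Qm, Matrix.mul_fin_two]
  norm_num

theorem hPmI : Pm⁻¹ = PmI := by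
  apply inv_eq_of_mul_eq_one_right
  ext i j
  simp only [Matrix.SpecialLinearGroup.coe_mul, Matrix.SpecialLinearGroup.coe_one]
  simp only [Pm, PmI, Matrix.mul_fin_two]
  fin_cases i <;> fin_cases j <;> norm_num [Matrix.one_fin_two]

theorem hQmI : Qm⁻¹ = QmI := by
  apply inv_eq_of_mul_eq_one_right
  ext i j
  simp only [Matrix.SpecialLinearGroup.coe_mul, Matrix.SpecialLinearGroup.coe_one]
  simp only [Qm, QmI, Matrix.mul_fin_two]
  fin_cases i <;> fin_cases j <;> norm_num [Matrix.one_fin_two]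

/-- The ping-pong "X" sets. -/
def Xset : Bool → Set PPV
  | true => {v | v.1 0 * (v.1 0 + v.1 1) < 0 ∨ v.1 0 + v.1 1 = 0}
  | false => {v | v.1 1 * (v.1 1 - v.1 0) < 0 ∨ v.1 1 - v.1 0 = 0}

/-- The ping-pong "Y" sets. -/
def Yset : Bool → Set PPV
  | true => {v | v.1 1 * (v.1 0 + v.1 1) ≤ 0 ∧ v.1 0 + v.1 1 ≠ 0}
  | false => {v | 0 ≤ v.1 0 * (v.1 1 - v.1 0) ∧ v.1 1 - v.1 0 ≠ 0}

theorem vec_ne (v : PPV) : v.1 0 ≠ 0 ∨ v.1 1 ≠ 0 := by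
  by_contra h
  push_neg at h
  exact v.2 (funext fun i => by fin_cases i <;> simp [h.1, h.2])

theorem mulVec_two (M : Matrix (Fin 2) (Fin 2) ℤ) (v : Fin 2 → ℤ) :
    M.mulVec v = ![M 0 0 * v 0 + M 0 1 * v 1, M 1 0 * v 0 + M 1 1 * v 1] := by
  funext i
  fin_cases i <;> simp [Matrix.mulVec, dotProduct, Fin.sum_univ_two]

theorem Qm_smul0 (v : PPV) : (Qm • v).1 0 = 2 * v.1 0 - v.1 1 := by
  rw [ppv_smul_coe, mulVec_two]; simp [Qm]; ring
theorem Qm_smul1 (v : PPV) : (Qm • v).1 1 = v.1 0 := by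
  rw [ppv_smul_coe, mulVec_two]; simp [Qm]
theorem Pm_smul0 (v : PPV) : (Pm • v).1 0 = -(v.1 1) := by
  rw [ppv_smul_coe, mulVec_two]; simp [Pm]
theorem Pm_smul1 (v : PPV) : (Pm • v).1 1 = v.1 0 + 2 * v.1 1 := by
  rw [ppv_smul_coe, mulVec_two]; simp [Pm]
theorem QmI_smul0 (v : PPV) : (QmI • v).1 0 = v.1 1 := by
  rw [ppv_smul_coe, mulVec_two]; simp [QmI]
theorem QmI_smul1 (v : PPV) : (QmI • v).1 1 = -(v.1 0) + 2 * v.1 1 := by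
  rw [ppv_smul_coe, mulVec_two]; simp [QmI]; try ring
theorem PmI_smul0 (v : PPV) : (PmI • v).1 0 = 2 * v.1 0 + v.1 1 := by
  rw [ppv_smul_coe, mulVec_two]; simp [PmI]
theorem PmI_smul1 (v : PPV) : (PmI • v).1 1 = -(v.1 0) := by
  rw [ppv_smul_coe, mulVec_two]; simp [PmI]

/-- P = ABA⁻¹ and Q = BAB⁻¹ generate a free subgroup of SL(2,ℤ) of rank 2. -/
theorem P_Q_free :
    Function.Injective
      (FreeGroup.lift
        (fun b : Bool => if b then A * B * A⁻¹ else B * A * B⁻¹) :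
        FreeGroup Bool →* SL2Z) := by
  apply FreeGroup.injective_lift_of_ping_pong _ Xset Yset
  · -- nonempty
    intro i
    cases i
    · exact ⟨⟨![1, 1], by intro h; simpa using congrFun h 0⟩, Or.inr (by norm_num [Xset])⟩
    · exact ⟨⟨![1, -1], by intro h; simpa using congrFun h 0⟩, Or.inr (by norm_num [Xset])⟩
  · -- X pairwise disjoint
    intro i j hij
    have key : ∀ v : PPV, v ∈ Xset false → v ∈ Xset true → False := by
      intro v h0 h1
      simp only [Xset, Set.mem_setOf_eq] at h0 h1
      rcases h0 with h0 | h0 <;> rcases h1 with h1 | h1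
      · nlinarith [sq_nonneg (v.1 0), sq_nonneg (v.1 1)]
      · have h2 : v.1 1 * (v.1 0 + v.1 1) = 0 := by rw [h1]; ring
        nlinarith [sq_nonneg (v.1 1)]
      · have h2 : v.1 0 * (v.1 1 - v.1 0) = 0 := by rw [h0]; ring
        nlinarith [sq_nonneg (v.1 0)]
      · rcases vec_ne v with h | h
        · exact h (by linarith)
        · exact h (by linarith)
    cases i <;> cases j <;> simp at hij <;>
      [exact Set.disjoint_left.mpr fun v hv hv' => key v hv hv';
       exact Set.disjoint_left.mpr fun v hv hv' => key v hv' hv]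
  · -- Y pairwise disjoint
    intro i j hij
    have key : ∀ v : PPV, v ∈ Yset false → v ∈ Yset true → False := by
      intro v h0 h1
      simp only [Yset, Set.mem_setOf_eq] at h0 h1
      obtain ⟨h0a, h0b⟩ := h0
      obtain ⟨h1a, h1b⟩ := h1
      have ha : v.1 0 = 0 := by nlinarith [sq_nonneg (v.1 0), sq_nonneg (v.1 1)]
      have hb : v.1 1 = 0 := by nlinarith [sq_nonneg (v.1 0), sq_nonneg (v.1 1)]
      exact h1b (by rw [ha, hb]; ring)
    cases i <;> cases j <;> simp at hij <;>
      [exact Set.disjoint_left.mpr fun v hv hv' => key v hv hv';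
       exact Set.disjoint_left.mpr fun v hv hv' => key v hv' hv]
  · -- X i disjoint Y j
    intro i j
    apply Set.disjoint_left.mpr
    intro v hx hy
    cases i <;> cases j <;>
      simp only [Xset, Yset, Set.mem_setOf_eq] at hx hy
    · -- X false, Y false
      obtain ⟨hy1, hy2⟩ := hy
      rcases hx with hx | hx
      · nlinarith [sq_nonneg (v.1 1 - v.1 0)]
      · exact hy2 hx
    · -- X false, Y true
      obtain ⟨hy1, hy2⟩ := hy
      rcases hx with hx | hx
      · nlinarith [sq_nonneg (v.1 1)]
      · have hb : v.1 1 = 0 := by nlinarith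
        have ha : v.1 0 = 0 := by linarith
        exact hy2 (by rw [ha, hb]; ring)
    · -- X true, Y false
      obtain ⟨hy1, hy2⟩ := hy
      rcases hx with hx | hx
      · nlinarith [sq_nonneg (v.1 0)]
      · have ha : v.1 0 = 0 := by nlinarith
        have hb : v.1 1 = 0 := by linarith
        exact hy2 (by rw [ha, hb]; ring)
    · -- X true, Y true
      obtain ⟨hy1, hy2⟩ := hy
      rcases hx with hx | hx
      · nlinarith [sq_nonneg (v.1 0 + v.1 1)]
      · exact hy2 hx
  · -- a i • (Y i)ᶜ ⊆ X i
    intro i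
    rintro _ ⟨v, hv, rfl⟩
    cases i
    · -- Q = BAB⁻¹
      simp only [Bool.false_eq_true, if_false, hQm]
      simp only [Set.mem_compl_iff, Yset, Set.mem_setOf_eq, not_and_or,
        not_le, not_ne_iff] at hv
      show Qm • v ∈ Xset false
      simp only [Xset, Set.mem_setOf_eq, Qm_smul0, Qm_smul1]
      rcases hv with hv | hv
      · left; nlinarith
      · right; linarith
    · -- P = ABA⁻¹
      simp only [if_true, hPm]
      simp only [Set.mem_compl_iff, Yset, Set.mem_setOf_eq, not_and_or,
        not_le, not_ne_iff] at hv
      show Pm • v ∈ Xset true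
      simp only [Xset, Set.mem_setOf_eq, Pm_smul0, Pm_smul1]
      rcases hv with hv | hv
      · left; nlinarith
      · right; linarith
  · -- (a i)⁻¹ • (X i)ᶜ ⊆ Y i
    intro i
    rintro _ ⟨v, hv, rfl⟩
    cases i
    · -- Q⁻¹
      simp only [Pi.inv_apply, Bool.false_eq_true, if_false, hQm, hQmI]
      simp only [Set.mem_compl_iff, Xset, Set.mem_setOf_eq, not_or, not_lt] at hv
      obtain ⟨h1, h2⟩ := hv
      show QmI • v ∈ Yset false
      simp only [Yset, Set.mem_setOf_eq, QmI_smul0, QmI_smul1]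
      constructor
      · nlinarith
      · intro h; exact h2 (by linarith)
    · -- P⁻¹
      simp only [Pi.inv_apply, if_true, hPm, hPmI]
      simp only [Set.mem_compl_iff, Xset, Set.mem_setOf_eq, not_or, not_lt] at hv
      obtain ⟨h1, h2⟩ := hv
      show PmI • v ∈ Yset true
      simp only [Yset, Set.mem_setOf_eq, PmI_smul0, PmI_smul1]
      constructor
      · nlinarith
      · intro h; exact h2 (by linarith)
end
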